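/- arXiv:2605.00173 — 2 statements merged into one kernel-verified Lean document; each statement's English description precedes it below -/
import Mathlib

section
/- Orbit Classification Lemma. Let T be an ITM on r intervals and let x ∈ [0,1). Then at least one of the following three possibilities holds: (1) T^n(x) is a geometric discontinuity of T for some n ≥ 0; (2) T^n(x) is a periodic point of T for some n ≥ 0; (3) there exist geometric discontinuities β and β_* of T such that the forward orbit of x accumulates on β from the left and on β_* from the right, i.e. for every δ > 0 there exist n, m ≥ 0 with β − δ < T^n(x) < β and β_* < T^m(x) < β_* + δ. -/
open Filter Set

/-- An interval translation map on `r` intervals: discontinuity points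
`0 = β₀ < β₁ < ⋯ < β_{r-1} < β_r = 1` (field `pts`) and translation parameters
`γ₁, …, γ_r` (field `tr`). -/
structure ITM (r : ℕ) : Type where
  hr : 2 ≤ r
  pts : Fin (r + 1) → ℝ
  tr : Fin r → ℝ
  pts_zero : pts 0 = 0
  pts_last : pts (Fin.last r) = 1
  pts_mono : StrictMono pts
  tr_lb : ∀ i : Fin r, -(pts i.castSucc) ≤ tr i
  tr_ub : ∀ i : Fin r, tr i ≤ 1 - pts i.succ

namespace ITM

variable {r : ℕ}

/-- The continuity interval `I_i = [β_{i-1}, β_i)`. -/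
def seg (M : ITM r) (i : Fin r) : Set ℝ := Set.Ico (M.pts i.castSucc) (M.pts i.succ)

open Classical in
/-- The interval translation map itself: `T x = x + γ_i` for `x ∈ I_i`. -/
noncomputable def map (M : ITM r) (x : ℝ) : ℝ :=
  x + ∑ i : Fin r, if x ∈ M.seg i then M.tr i else 0

/-- The attractor `X = ⋂ₙ Tⁿ([0,1))`. -/
def X (M : ITM r) : Set ℝ := ⋂ n : ℕ, (M.map)^[n] '' Set.Ico (0 : ℝ) 1

/-- The geometric discontinuities `β₁, …, β_{r-1}`; `disc t` has index `ind = t+1`. -/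
def disc (M : ITM r) (t : Fin (r - 1)) : ℝ := M.pts ⟨t.1 + 1, by have := t.isLt; omega⟩

/-- One-sided iterate `Tⁿ(x⁺) = lim_{y ↓ x} Tⁿ(y)`. -/
noncomputable def iterR (M : ITM r) (n : ℕ) (x : ℝ) : ℝ :=
  limUnder (nhdsWithin x (Set.Ioi x)) (fun y => (M.map)^[n] y)

/-- One-sided iterate `Tⁿ(x⁻) = lim_{y ↑ x} Tⁿ(y)`. -/
noncomputable def iterL (M : ITM r) (n : ℕ) (x : ℝ) : ℝ :=
  limUnder (nhdsWithin x (Set.Iio x)) (fun y => (M.map)^[n] y)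

/-- Signed iterate: `sg = true` is the `⁺`-side, `sg = false` the `⁻`-side. -/
noncomputable def sIter (M : ITM r) (n : ℕ) (x : ℝ) (sg : Bool) : ℝ :=
  if sg then M.iterR n x else M.iterL n x

/-- `J` is an interval component of the attractor: a connected component of `X`
that is a nondegenerate (half-open) interval. -/
def IsIntervalComponent (M : ITM r) (J : Set ℝ) : Prop :=
  (∃ a b : ℝ, a < b ∧ J = Set.Ico a b) ∧ ∃ x ∈ M.X, J = connectedComponentIn M.X x

open Classical in
/-- `k_s(x⁺, n)`: number of visits of the `⁺`-orbit of `x` to `I_s` before time `n`. -/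
noncomputable def kR (M : ITM r) (x : ℝ) (n : ℕ) (s : Fin r) : ℕ :=
  ((Finset.range n).filter
    (fun i => M.pts s.castSucc ≤ M.iterR i x ∧ M.iterR i x < M.pts s.succ)).card

open Classical in
/-- `k_s(x⁻, n)`: number of visits of the `⁻`-orbit of `x` to `I_s` before time `n`. -/
noncomputable def kL (M : ITM r) (x : ℝ) (n : ℕ) (s : Fin r) : ℕ :=
  ((Finset.range n).filter
    (fun i => M.pts s.castSucc < M.iterL i x ∧ M.iterL i x ≤ M.pts s.succ)).card

open Classical in
/-- `k_s(x, n)` for a geometric point `x`. -/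
noncomputable def kGeo (M : ITM r) (x : ℝ) (n : ℕ) (s : Fin r) : ℕ :=
  ((Finset.range n).filter (fun i => (M.map)^[i] x ∈ M.seg s)).card

/-- The forward orbit of a set. -/
def orbitSet (M : ITM r) (S : Set ℝ) : Set ℝ := ⋃ n : ℕ, (M.map)^[n] '' S

end ITM

/-- The space `W(r) = ℝ^r ⊕ ℝ^{r-1}` of coefficient vectors. -/
abbrev Wsp (r : ℕ) : Type := (Fin r → ℝ) × (Fin (r - 1) → ℝ)


namespace ITM
variable {r : ℕ}

/-- First return time to `J` (junk value if the orbit never returns). -/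
noncomputable def retTime (M : ITM r) (J : Set ℝ) (x : ℝ) : ℕ :=
  sInf {k : ℕ | 1 ≤ k ∧ (M.map)^[k] x ∈ J}

/-- First return map to `J`. -/
noncomputable def retMap (M : ITM r) (J : Set ℝ) (x : ℝ) : ℝ :=
  (M.map)^[M.retTime J x] x

/-- The signed point `x⁺` belongs to the attractor `X`. -/
def posInX (M : ITM r) (x : ℝ) : Prop :=
  ∀ n : ℕ, ∃ ε > (0 : ℝ), Set.Ico x (x + ε) ⊆ (M.map)^[n] '' Set.Ico (0 : ℝ) 1

/-- The signed point `x⁻` belongs to the attractor `X`. -/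
def negInX (M : ITM r) (x : ℝ) : Prop :=
  ∀ n : ℕ, ∃ ε > (0 : ℝ), Set.Ico (x - ε) x ⊆ (M.map)^[n] '' Set.Ico (0 : ℝ) 1

/-- The union of all interval components of the attractor. -/
def A1' (M : ITM r) : Set ℝ := ⋃₀ {J : Set ℝ | M.IsIntervalComponent J}

end ITM

/-- A Cantor set: nonempty, compact, totally disconnected, without isolated points. -/
def IsCantorSet (S : Set ℝ) : Prop :=
  S.Nonempty ∧ IsCompact S ∧ IsTotallyDisconnected S ∧
    ∀ x ∈ S, AccPt x (Filter.principal S)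

namespace ITM
variable {r : ℕ}

/-- The orbit of a point. -/
noncomputable def orb (M : ITM r) (x : ℝ) (n : ℕ) : ℝ := (M.map)^[n] x

lemma orb_def (M : ITM r) (x : ℝ) (n : ℕ) : M.orb x n = (M.map)^[n] x := rfl

lemma orb_add (M : ITM r) (x : ℝ) (n m : ℕ) :
    M.orb x (n + m) = (M.map)^[m] (M.orb x n) := by
  rw [orb, orb, Nat.add_comm, Function.iterate_add_apply]

lemma exists_seg (M : ITM r) {x : ℝ} (hx : x ∈ Set.Ico (0:ℝ) 1) :
    ∃ i : Fin r, x ∈ M.seg i := by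
  classical
  have hr : 0 < r := by have := M.hr; omega
  set s : Finset (Fin r) := Finset.univ.filter (fun i => M.pts i.castSucc ≤ x) with hs
  have h0 : (⟨0, hr⟩ : Fin r) ∈ s := by
    simp only [hs, Finset.mem_filter, Finset.mem_univ, true_and]
    have h00 : (⟨0, hr⟩ : Fin r).castSucc = (0 : Fin (r+1)) := rfl
    rw [h00, M.pts_zero]; exact hx.1
  have hne : s.Nonempty := ⟨_, h0⟩
  set i := s.max' hne with hi
  have hile : M.pts i.castSucc ≤ x := by
    have := s.max'_mem hne
    simp only [hs, Finset.mem_filter] at this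
    exact this.2
  refine ⟨i, hile, ?_⟩
  by_contra h
  push_neg at h
  have hlt : i.succ < Fin.last r := by
    have hpl : M.pts i.succ < M.pts (Fin.last r) := by
      rw [M.pts_last]; exact lt_of_le_of_lt h hx.2
    exact M.pts_mono.lt_iff_lt.mp hpl
  have hi1 : (i : ℕ) + 1 < r := by simpa [Fin.lt_def] using hlt
  have hmem : (⟨(i:ℕ)+1, hi1⟩ : Fin r) ∈ s := by
    simp only [hs, Finset.mem_filter, Finset.mem_univ, true_and]
    have hcs : (⟨(i:ℕ)+1, hi1⟩ : Fin r).castSucc = i.succ := by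
      ext; simp
    rw [hcs]; exact h
  have hle := s.le_max' _ hmem
  rw [← hi] at hle
  simp only [Fin.le_def] at hle
  omega

lemma map_eq_of_mem (M : ITM r) {x : ℝ} {i : Fin r} (h : x ∈ M.seg i) :
    M.map x = x + M.tr i := by
  classical
  have hsum : (∑ j : Fin r, if x ∈ M.seg j then M.tr j else 0) = M.tr i := by
    rw [Finset.sum_eq_single i]
    · simp [h]
    · intro j _ hj
      have hx' : x ∉ M.seg j := by
        intro hxj
        rcases lt_or_gt_of_ne hj with hlt | hlt
        · have hle : M.pts j.succ ≤ M.pts i.castSucc := by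
            apply M.pts_mono.monotone
            simp only [Fin.lt_def] at hlt
            simp only [Fin.le_def, Fin.val_succ, Fin.coe_castSucc]
            omega
          exact absurd hxj.2 (not_lt.mpr (le_trans hle h.1))
        · have hle : M.pts i.succ ≤ M.pts j.castSucc := by
            apply M.pts_mono.monotone
            simp only [Fin.lt_def] at hlt
            simp only [Fin.le_def, Fin.val_succ, Fin.coe_castSucc]
            omega
          exact absurd h.2 (not_lt.mpr (le_trans hle hxj.1))
      simp [hx']
    · intro hi; exact absurd (Finset.mem_univ i) hi
  rw [map, hsum]

lemma map_mem (M : ITM r) {x : ℝ} (hx : x ∈ Set.Ico (0:ℝ) 1) :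
    M.map x ∈ Set.Ico (0:ℝ) 1 := by
  obtain ⟨i, hi⟩ := M.exists_seg hx
  rw [M.map_eq_of_mem hi]
  constructor
  · have := M.tr_lb i; have := hi.1; linarith
  · have := M.tr_ub i; have := hi.2; linarith

lemma orb_mem (M : ITM r) {x : ℝ} (hx : x ∈ Set.Ico (0:ℝ) 1) (n : ℕ) :
    M.orb x n ∈ Set.Ico (0:ℝ) 1 := by
  induction n with
  | zero => simpa [orb]
  | succ n ih =>
    rw [orb, Function.iterate_succ_apply']
    exact M.map_mem ih

/-- Key rigidity lemma: under the separation hypothesis `SEP`, all iterates act as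
translations on the interval between two close orbit points. -/
lemma key (M : ITM r) {x δ : ℝ} (hx : x ∈ Set.Ico (0:ℝ) 1)
    (SEP : ∀ a b : ℕ, M.orb x a ≤ M.orb x b → M.orb x b - M.orb x a < δ →
      ∀ i : Fin r, M.orb x a ∈ M.seg i → M.orb x b < M.pts i.succ) :
    ∀ (a b : ℕ), M.orb x a ≤ M.orb x b → M.orb x b - M.orb x a < δ →
    ∀ k, ∀ z ∈ Set.Icc (M.orb x a) (M.orb x b),
      (M.map)^[k] z = z + (M.orb x (a+k) - M.orb x a) := by
  intro a b hab hd k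
  induction k with
  | zero => intro z hz; simp
  | succ k ih =>
    intro z hz
    obtain ⟨i, hi⟩ := M.exists_seg (M.orb_mem hx (a+k))
    have hbk : M.orb x (b+k) - M.orb x (a+k) = M.orb x b - M.orb x a := by
      have h1 : M.orb x (b+k) = (M.map)^[k] (M.orb x b) := M.orb_add x b k
      rw [h1, ih (M.orb x b) ⟨hab, le_refl _⟩]
      ring
    have h2 : M.orb x (a+k) ≤ M.orb x (b+k) := by linarith
    have h3 : M.orb x (b+k) < M.pts i.succ := SEP (a+k) (b+k) h2 (by linarith) i hi
    have hz2 : (M.map)^[k] z ∈ M.seg i := by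
      rw [ih z hz]
      constructor
      · have hA := hi.1; have hB := hz.1; linarith
      · have hB := hz.2; linarith
    have h4 : (M.map)^[k+1] z = (M.map)^[k] z + M.tr i := by
      rw [Function.iterate_succ_apply', M.map_eq_of_mem hz2]
    have h5 : M.orb x (a+(k+1)) = M.orb x (a+k) + M.tr i := by
      have he : M.orb x (a+(k+1)) = (M.map)^[1] (M.orb x (a+k)) := by
        rw [show a+(k+1) = (a+k)+1 by ring]
        exact M.orb_add x (a+k) 1
      rw [he, Function.iterate_one, M.map_eq_of_mem hi]
    rw [h4, ih z hz, h5]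
    ring

/-- Separation from the uniform left gap at discontinuities. -/
lemma sep_left (M : ITM r) {x δ : ℝ} (hx : x ∈ Set.Ico (0:ℝ) 1)
    (gap : ∀ (t : Fin (r-1)) (n : ℕ), ¬ (M.disc t - δ < M.orb x n ∧ M.orb x n < M.disc t)) :
    ∀ a b : ℕ, M.orb x a ≤ M.orb x b → M.orb x b - M.orb x a < δ →
      ∀ i : Fin r, M.orb x a ∈ M.seg i → M.orb x b < M.pts i.succ := by
  intro a b hab hd i hi
  by_contra h
  push_neg at h
  have hb1 : M.orb x b < 1 := (M.orb_mem hx b).2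
  have hsl : (i:ℕ) + 1 < r := by
    by_contra hc
    have hlast : i.succ = Fin.last r := by
      ext; simp only [Fin.val_succ, Fin.val_last]; omega
    rw [hlast, M.pts_last] at h; linarith
  have hrr : (i:ℕ) < r - 1 := by omega
  set t : Fin (r-1) := ⟨i, hrr⟩ with ht
  have hdt : M.disc t = M.pts i.succ := by
    rfl
  refine gap t a ⟨?_, by rw [hdt]; exact hi.2⟩
  rw [hdt]; linarith

/-- Separation from the uniform right gap at discontinuities. -/
lemma sep_right (M : ITM r) {x δ : ℝ} (hx : x ∈ Set.Ico (0:ℝ) 1)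
    (hdisc : ∀ (n : ℕ) (t : Fin (r-1)), M.orb x n ≠ M.disc t)
    (gap : ∀ (t : Fin (r-1)) (n : ℕ), ¬ (M.disc t < M.orb x n ∧ M.orb x n < M.disc t + δ)) :
    ∀ a b : ℕ, M.orb x a ≤ M.orb x b → M.orb x b - M.orb x a < δ →
      ∀ i : Fin r, M.orb x a ∈ M.seg i → M.orb x b < M.pts i.succ := by
  intro a b hab hd i hi
  by_contra h
  push_neg at h
  have hb1 : M.orb x b < 1 := (M.orb_mem hx b).2
  have hsl : (i:ℕ) + 1 < r := by
    by_contra hc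
    have hlast : i.succ = Fin.last r := by
      ext; simp only [Fin.val_succ, Fin.val_last]; omega
    rw [hlast, M.pts_last] at h; linarith
  have hrr : (i:ℕ) < r - 1 := by omega
  set t : Fin (r-1) := ⟨i, hrr⟩ with ht
  have hdt : M.disc t = M.pts i.succ := by
    rfl
  have hne := hdisc b t
  have h1 : M.disc t < M.orb x b := lt_of_le_of_ne (hdt ▸ h) (Ne.symm hne)
  have h2 : M.orb x b < M.disc t + δ := by
    rw [hdt]; have := hi.2; linarith
  exact gap t b ⟨h1, h2⟩

/-- Escape: under the separation hypothesis and injectivity of the orbit, we get a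
contradiction (the orbit would translate out of `[0,1)`). -/
lemma escape (M : ITM r) {x δ : ℝ} (hx : x ∈ Set.Ico (0:ℝ) 1) (hδ : 0 < δ)
    (SEP : ∀ a b : ℕ, M.orb x a ≤ M.orb x b → M.orb x b - M.orb x a < δ →
      ∀ i : Fin r, M.orb x a ∈ M.seg i → M.orb x b < M.pts i.succ)
    (hinj : ∀ a b : ℕ, a < b → M.orb x a ≠ M.orb x b) : False := by
  classical
  -- pigeonhole: two orbit points within δ
  obtain ⟨m, hm⟩ := exists_nat_gt (1/δ)
  have hmδ : 1 < (m:ℝ) * δ := by rwa [div_lt_iff₀ hδ] at hm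
  have hmaps : ∀ n ∈ Finset.range (m+1), ⌊M.orb x n / δ⌋₊ ∈ Finset.range m := by
    intro n _
    rw [Finset.mem_range, Nat.floor_lt (div_nonneg (M.orb_mem hx n).1 hδ.le)]
    rw [div_lt_iff₀ hδ]
    have h1 := (M.orb_mem hx n).2
    linarith
  obtain ⟨a0, ha0, b0, hb0, hne0, heq0⟩ :=
    Finset.exists_ne_map_eq_of_card_lt_of_maps_to
      (by simpa using Nat.lt_succ_self m) hmaps
  have hclose : ∀ p q : ℕ, ⌊M.orb x p / δ⌋₊ = ⌊M.orb x q / δ⌋₊ →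
      M.orb x q - M.orb x p < δ := by
    intro p q h
    have h0p := (M.orb_mem hx p).1
    have h0q := (M.orb_mem hx q).1
    have l1 : (⌊M.orb x p / δ⌋₊ : ℝ) * δ ≤ M.orb x p := by
      rw [← le_div_iff₀ hδ]; exact Nat.floor_le (div_nonneg h0p hδ.le)
    have l2 : M.orb x q < (⌊M.orb x q / δ⌋₊ : ℝ) * δ + δ := by
      have := Nat.lt_floor_add_one (M.orb x q / δ)
      have h' : M.orb x q / δ < (⌊M.orb x q / δ⌋₊ : ℝ) + 1 := this
      have := (div_lt_iff₀ hδ).mp h'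
      nlinarith
    rw [h] at l1
    linarith
  -- order the two indices
  obtain ⟨a, b, hab, habe⟩ : ∃ a b : ℕ, a < b ∧
      ⌊M.orb x a / δ⌋₊ = ⌊M.orb x b / δ⌋₊ := by
    rcases lt_or_gt_of_ne hne0 with h | h
    · exact ⟨a0, b0, h, heq0⟩
    · exact ⟨b0, a0, h, heq0.symm⟩
  set c : ℝ := M.orb x b - M.orb x a with hc
  have hcne : c ≠ 0 := fun h0 => hinj a b hab (by rw [hc] at h0; linarith)
  have hcu : c < δ := hclose a b habe
  have hcl : -c < δ := by
    have := hclose b a habe.symm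
    rw [hc]; linarith
  set k : ℕ := b - a with hk
  have hbk : b = a + 1 * k := by omega
  have keyl := M.key hx SEP
  -- P : orbit advances by c every k steps
  have P : ∀ j : ℕ, M.orb x (a + (j+1)*k) = M.orb x (a + j*k) + c := by
    intro j
    induction j with
    | zero =>
      rw [show a + 0 * k = a by ring, ← hbk, hc]; ring
    | succ j ih =>
      rcases lt_trichotomy c 0 with hcs | hcs | hcs
      · -- interval [orb(a+(j+1)k), orb(a+jk)]
        have happ := keyl (a+(j+1)*k) (a+j*k) (by rw [ih]; linarith)
          (by rw [ih]; linarith) k (M.orb x (a+j*k))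
          ⟨by rw [ih]; linarith, le_refl _⟩
        have hmk : (M.map)^[k] (M.orb x (a+j*k)) = M.orb x (a+(j+1)*k) := by
          rw [← M.orb_add]; congr 1; ring
        rw [hmk] at happ
        have hidx : a + (j+1)*k + k = a + (j+1+1)*k := by ring
        rw [hidx] at happ
        rw [ih] at happ
        linarith [happ]
      · exact absurd hcs hcne
      · -- interval [orb(a+jk), orb(a+(j+1)k)]
        have happ := keyl (a+j*k) (a+(j+1)*k) (by rw [ih]; linarith)
          (by rw [ih]; linarith) k (M.orb x (a+(j+1)*k))
          ⟨by rw [ih]; linarith, le_refl _⟩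
        have hmk : (M.map)^[k] (M.orb x (a+(j+1)*k)) = M.orb x (a+(j+1+1)*k) := by
          rw [← M.orb_add]; congr 1; ring
        rw [hmk] at happ
        have h1 : M.orb x (a+j*k + k) = M.orb x (a+(j+1)*k) := by congr 1; ring
        rw [h1, ih] at happ
        linarith [happ]
  have Q : ∀ j : ℕ, M.orb x (a + j*k) = M.orb x a + j*c := by
    intro j
    induction j with
    | zero => simp
    | succ j ih =>
      rw [P j, ih]
      push_cast
      ring
  have h0a := (M.orb_mem hx a).1
  have h1a := (M.orb_mem hx a).2
  rcases lt_or_gt_of_ne hcne with hcs | hcs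
  · obtain ⟨j, hj⟩ := exists_nat_gt (1 / (-c))
    have hjc : 1 < (j:ℝ) * (-c) := by rwa [div_lt_iff₀ (by linarith)] at hj
    have h0 := (M.orb_mem hx (a + j*k)).1
    rw [Q j] at h0
    nlinarith
  · obtain ⟨j, hj⟩ := exists_nat_gt (1 / c)
    have hjc : 1 < (j:ℝ) * c := by rwa [div_lt_iff₀ hcs] at hj
    have h1 := (M.orb_mem hx (a + j*k)).2
    rw [Q j] at h1
    nlinarith

end ITM

/-- **Orbit Classification Lemma** (Lemma 2.6): every point of `[0,1)` either lands on a
discontinuity, lands on a periodic point, or accumulates on a discontinuity from the left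
and on a discontinuity from the right. -/
theorem orbit_classification {r : ℕ} (M : ITM r) (x : ℝ) (hx : x ∈ Set.Ico (0 : ℝ) 1) :
    (∃ n : ℕ, ∃ t : Fin (r - 1), (M.map)^[n] x = M.disc t) ∨
    (∃ n p : ℕ, 0 < p ∧ (M.map)^[p] ((M.map)^[n] x) = (M.map)^[n] x) ∨
    (∃ t t' : Fin (r - 1), ∀ δ > (0 : ℝ),
      (∃ n : ℕ, M.disc t - δ < (M.map)^[n] x ∧ (M.map)^[n] x < M.disc t) ∧
      (∃ m : ℕ, M.disc t' < (M.map)^[m] x ∧ (M.map)^[m] x < M.disc t' + δ)) := by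
  classical
  by_cases h1 : ∃ n : ℕ, ∃ t : Fin (r-1), (M.map)^[n] x = M.disc t
  · exact Or.inl h1
  by_cases h2 : ∃ n p : ℕ, 0 < p ∧ (M.map)^[p] ((M.map)^[n] x) = (M.map)^[n] x
  · exact Or.inr (Or.inl h2)
  refine Or.inr (Or.inr ?_)
  push_neg at h1 h2
  have hinj : ∀ a b : ℕ, a < b → M.orb x a ≠ M.orb x b := by
    intro a b hab heq
    refine h2 a (b - a) (by omega) ?_
    show (M.map)^[b-a] ((M.map)^[a] x) = (M.map)^[a] x
    rw [← Function.iterate_add_apply, show b - a + a = b from by omega]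
    exact heq.symm
  haveI hne : Nonempty (Fin (r-1)) := ⟨⟨0, by have := M.hr; omega⟩⟩
  by_cases hL : ∃ t : Fin (r-1), ∀ δ > (0:ℝ), ∃ n : ℕ,
      M.disc t - δ < (M.map)^[n] x ∧ (M.map)^[n] x < M.disc t
  · by_cases hR : ∃ t' : Fin (r-1), ∀ δ > (0:ℝ), ∃ m : ℕ,
        M.disc t' < (M.map)^[m] x ∧ (M.map)^[m] x < M.disc t' + δ
    · obtain ⟨t, ht⟩ := hL; obtain ⟨t', ht'⟩ := hR
      exact ⟨t, t', fun δ hδ => ⟨ht δ hδ, ht' δ hδ⟩⟩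
    · exfalso
      push_neg at hR
      choose δf hpos hgap using hR
      set δ : ℝ := Finset.univ.inf' Finset.univ_nonempty δf with hδdef
      have hδpos : 0 < δ := by
        rw [hδdef, Finset.lt_inf'_iff]
        intro t _; exact hpos t
      refine M.escape hx hδpos ?_ hinj
      refine M.sep_right hx (fun n t => h1 n t) ?_
      intro t n hcon
      have hg := hgap t n hcon.1
      have hle : δ ≤ δf t := Finset.inf'_le _ (Finset.mem_univ t)
      have := hcon.2
      rw [ITM.orb_def] at *
      linarith
  · exfalso
    push_neg at hL
    choose δf hpos hgap using hL
    set δ : ℝ := Finset.univ.inf' Finset.univ_nonempty δf with hδdef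
    have hδpos : 0 < δ := by
      rw [hδdef, Finset.lt_inf'_iff]
      intro t _; exact hpos t
    refine M.escape hx hδpos ?_ hinj
    refine M.sep_left hx ?_
    intro t n hcon
    have hle : δ ≤ δf t := Finset.inf'_le _ (Finset.mem_univ t)
    have hg := hgap t n (by rw [ITM.orb_def] at hcon; linarith [hcon.1])
    have := hcon.2
    rw [ITM.orb_def] at *
    linarith
end

section
/- Let T be an ITM on r intervals. Then the attractor X has only finitely many interval components, i.e. the set of connected components of X that are nondegenerate intervals is finite. -/
open Filter Set

/-!
Let `[a, b)` be an interval component of `X`, so that `b ∉ X` while `X` fills a left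
neighbourhood of `b`. Pick `n` with `b ∉ Tⁿ[0,1)`. Since `Tⁿ[0,1) = T(Tⁿ⁻¹[0,1))` and there are only
finitely many branches, `b` is approached from the left by `Tⁿ⁻¹[0,1) ∩ I_j + γ_j` for one `j`;
then `b = T⁻ b'` with `b' = b - γ_j ∈ (β_{j-1}, β_j]`, and either `b' = β_j` or `b'` is in the same
position with respect to `Tⁿ⁻¹[0,1)`. Hence every right endpoint lies on the forward orbit of one of
the `β_j` under the left-continuous map `T⁻`.

Each of these orbits carries only finitely many right endpoints. This is clear if the orbit is
eventually periodic. An injective orbit meets the `β_j` only finitely often, and elsewhere `T⁻ = T`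
maps `X` into `X`; so after a late right endpoint the orbit never returns to `X`. From then on
the left germ `[y - ν, y) ⊆ X` of the orbit point `y` is translated along by `T⁻`, and it is cut
down only when it reaches past the left end `β` of the branch of `y`, leaving `[β, y) ⊆ X`. Two
such cuts at the same `β` would put one orbit point inside the other's germ, so there are finitely
many cuts and all orbit points keep germs of a common length `ε > 0`. The orbit is then
`ε`-separated in `[0,1]`, contradicting injectivity.
-/

open Topology

section FinPartition

variable {α : Type*} [LinearOrder α]

theorem Fin.exists_mem_Ico_of_monotone :
    ∀ {n : ℕ} {p : Fin (n + 1) → α}, Monotone p → ∀ {x : α}, p 0 ≤ x → x < p (Fin.last n) →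
      ∃ j : Fin n, x ∈ Ico (p j.castSucc) (p j.succ)
  | 0, _, _, _, h0, h1 => absurd (h0.trans_lt h1) (lt_irrefl _)
  | n + 1, p, hp, x, h0, h1 => by
    by_cases hx : x < p (Fin.last n).castSucc
    · obtain ⟨j, hj⟩ := Fin.exists_mem_Ico_of_monotone (p := p ∘ Fin.castSucc)
        (hp.comp Fin.strictMono_castSucc.monotone) h0 hx
      exact ⟨j.castSucc, by simpa only [Fin.succ_castSucc, Function.comp_apply] using hj⟩
    · exact ⟨Fin.last n, not_lt.1 hx, by rwa [Fin.succ_last]⟩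

theorem Fin.exists_mem_Ioc_of_monotone :
    ∀ {n : ℕ} {p : Fin (n + 1) → α}, Monotone p → ∀ {x : α}, p 0 < x → x ≤ p (Fin.last n) →
      ∃ j : Fin n, x ∈ Ioc (p j.castSucc) (p j.succ)
  | 0, _, _, _, h0, h1 => absurd (h0.trans_le h1) (lt_irrefl _)
  | n + 1, p, hp, x, h0, h1 => by
    by_cases hx : x ≤ p (Fin.last n).castSucc
    · obtain ⟨j, hj⟩ := Fin.exists_mem_Ioc_of_monotone (p := p ∘ Fin.castSucc)
        (hp.comp Fin.strictMono_castSucc.monotone) h0 hx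
      exact ⟨j.castSucc, by simpa only [Fin.succ_castSucc, Function.comp_apply] using hj⟩
    · exact ⟨Fin.last n, not_le.1 hx, by rwa [Fin.succ_last]⟩

theorem Fin.eq_of_mem_Ico_of_monotone {n : ℕ} {p : Fin (n + 1) → α} (hp : Monotone p) {x : α}
    {i j : Fin n} (hi : x ∈ Ico (p i.castSucc) (p i.succ))
    (hj : x ∈ Ico (p j.castSucc) (p j.succ)) : i = j := by
  wlog h : i < j generalizing i j
  · exact (lt_or_eq_of_le (not_lt.1 h)).elim (fun h' => (this hj hi h').symm) Eq.symm
  exact absurd (hi.2.trans_le ((hp (Fin.succ_le_castSucc_iff.2 h)).trans hj.1)) (lt_irrefl x)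

theorem Fin.eq_of_mem_Ioc_of_monotone {n : ℕ} {p : Fin (n + 1) → α} (hp : Monotone p) {x : α}
    {i j : Fin n} (hi : x ∈ Ioc (p i.castSucc) (p i.succ))
    (hj : x ∈ Ioc (p j.castSucc) (p j.succ)) : i = j := by
  wlog h : i < j generalizing i j
  · exact (lt_or_eq_of_le (not_lt.1 h)).elim (fun h' => (this hj hi h').symm) Eq.symm
  exact absurd (hi.2.trans_lt ((hp (Fin.succ_le_castSucc_iff.2 h)).trans_lt hj.1)) (lt_irrefl x)

end FinPartition

theorem Function.finite_range_iterate_of_not_injective {α : Type*} {f : α → α} {z : α}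
    (h : ¬ Function.Injective fun n => f^[n] z) : (range fun n => f^[n] z).Finite := by
  obtain ⟨a, b, hab, hlt⟩ : ∃ a b, f^[a] z = f^[b] z ∧ a < b := by
    simp only [Function.Injective, not_forall] at h
    obtain ⟨a, b, hab, hne⟩ := h
    exact (lt_or_gt_of_ne hne).elim (fun h => ⟨a, b, hab, h⟩) fun h => ⟨b, a, hab.symm, h⟩
  refine ((finite_Iio b).image fun n => f^[n] z).subset ?_
  rintro _ ⟨n, rfl⟩
  induction n using Nat.strong_induction_on with
  | _ n ih =>
    rcases lt_or_ge n b with hn | hn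
    · exact ⟨n, hn, rfl⟩
    · have hshift : f^[n] z = f^[n - b + a] z := by
        rw [Function.iterate_add_apply, hab, ← Function.iterate_add_apply, Nat.sub_add_cancel hn]
      show f^[n] z ∈ _
      rw [hshift]
      exact ih _ (by omega)

theorem exists_ne_dist_lt_of_isBounded_range {X : Type*} [PseudoMetricSpace X] [ProperSpace X]
    {y : ℕ → X} (hy : Bornology.IsBounded (range y)) {ε : ℝ} (hε : 0 < ε) :
    ∃ s t, s ≠ t ∧ dist (y s) (y t) < ε := by
  obtain ⟨_, -, φ, hφ, hlim⟩ := tendsto_subseq_of_bounded hy (mem_range_self ·)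
  obtain ⟨N, hN⟩ := Metric.cauchySeq_iff'.1 hlim.cauchySeq ε hε
  exact ⟨φ (N + 1), φ N, (hφ (Nat.lt_succ_self N)).ne', hN (N + 1) (Nat.le_succ N)⟩

theorem not_injective_of_forall_Ico_subset {S : Set ℝ} {w : ℕ → ℝ}
    (hw : Bornology.IsBounded (range w)) (hS : ∀ t, w t ∉ S) {ε : ℝ} (hε : 0 < ε)
    (hgerm : ∀ t, Ico (w t - ε) (w t) ⊆ S) : ¬ Function.Injective w := fun hinj => by
  obtain ⟨s, t, hst, hdist⟩ := exists_ne_dist_lt_of_isBounded_range hw hε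
  rw [Real.dist_eq, abs_sub_lt_iff] at hdist
  rcases lt_or_gt_of_ne (hinj.ne hst) with hlt | hlt
  · exact hS s (hgerm t ⟨by linarith, hlt⟩)
  · exact hS t (hgerm s ⟨by linarith, hlt⟩)

theorem mem_Ioc_of_frequently_mem_Ico {α : Type*} [TopologicalSpace α] [LinearOrder α]
    [OrderTopology α] {a b c : α} (h : ∃ᶠ y in 𝓝[<] c, y ∈ Ico a b) : c ∈ Ioc a b := by
  by_contra hc
  rcases not_and_or.1 hc with hac | hcb
  · refine h (eventually_nhdsWithin_of_forall fun y (hy : y < c) hy' => hac ?_)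
    exact hy'.1.trans_lt hy
  · exact h (mem_of_superset (Ioo_mem_nhdsLT (not_le.1 hcb)) fun y hy hy' =>
      (hy'.2.trans hy.1).false)

theorem notMem_of_Ico_eq_connectedComponentIn {α : Type*} [ConditionallyCompleteLinearOrder α]
    [TopologicalSpace α] [OrderTopology α] [DenselyOrdered α] {S : Set α} {x a b : α}
    (hab : a < b) (hx : x ∈ S) (h : Ico a b = connectedComponentIn S x) : b ∉ S := fun hb => by
  have hxab : x ∈ Icc a b := Ico_subset_Icc_self (h ▸ mem_connectedComponentIn hx)
  have hsub : Icc a b ⊆ S := by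
    rw [← Ico_insert_right hab.le, h]
    exact insert_subset hb (connectedComponentIn_subset _ _)
  have := isPreconnected_Icc.subset_connectedComponentIn hxab hsub (right_mem_Icc.2 hab.le)
  exact (h ▸ this).2.false

theorem Ico_eq_of_eq_connectedComponentIn {α : Type*} [LinearOrder α] [TopologicalSpace α]
    {S : Set α} {x x' a a' b : α} (hab : a < b) (hab' : a' < b)
    (h : Ico a b = connectedComponentIn S x) (h' : Ico a' b = connectedComponentIn S x') :
    Ico a b = Ico a' b := by
  have hm : max a a' ∈ connectedComponentIn S x := h ▸ ⟨le_max_left a a', max_lt hab hab'⟩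
  have hm' : max a a' ∈ connectedComponentIn S x' := h' ▸ ⟨le_max_right a a', max_lt hab hab'⟩
  rw [h, h', connectedComponentIn_eq hm, connectedComponentIn_eq hm']

namespace ITM

variable {r : ℕ} (M : ITM r)

def segIoc (j : Fin r) : Set ℝ := Ioc (M.pts j.castSucc) (M.pts j.succ)

open Classical in
/-- The left-continuous version `T⁻` of `T`, i.e. `T⁻ x = lim_{y ↑ x} T y`. -/
noncomputable def leftMap (x : ℝ) : ℝ :=
  x + ∑ i : Fin r, if x ∈ M.segIoc i then M.tr i else 0

def iterImage (n : ℕ) : Set ℝ := M.map^[n] '' Ico 0 1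

def IsRightEndpoint (b : ℝ) : Prop := b ∉ M.X ∧ ∃ a < b, Ico a b ⊆ M.X

variable {M}

variable (M) in
theorem exists_mem_seg {x : ℝ} (hx : x ∈ Ico (0 : ℝ) 1) : ∃ j, x ∈ M.seg j :=
  Fin.exists_mem_Ico_of_monotone M.pts_mono.monotone (M.pts_zero ▸ hx.1) (M.pts_last ▸ hx.2)

variable (M) in
theorem exists_mem_segIoc {x : ℝ} (hx : x ∈ Ioc (0 : ℝ) 1) : ∃ j, x ∈ M.segIoc j :=
  Fin.exists_mem_Ioc_of_monotone M.pts_mono.monotone (M.pts_zero ▸ hx.1) (M.pts_last ▸ hx.2)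

theorem map_eq_add_tr {x : ℝ} {j : Fin r} (hx : x ∈ M.seg j) : M.map x = x + M.tr j := by
  classical
  rw [map, Finset.sum_eq_single j (fun i _ hij => if_neg fun (hi : x ∈ M.seg i) => hij
    (Fin.eq_of_mem_Ico_of_monotone M.pts_mono.monotone hi hx)) (by simp), if_pos hx]

theorem leftMap_eq_add_tr {x : ℝ} {j : Fin r} (hx : x ∈ M.segIoc j) :
    M.leftMap x = x + M.tr j := by
  classical
  rw [leftMap, Finset.sum_eq_single j (fun i _ hij => if_neg fun (hi : x ∈ M.segIoc i) => hij
    (Fin.eq_of_mem_Ioc_of_monotone M.pts_mono.monotone hi hx)) (by simp), if_pos hx]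

theorem add_tr_mem_Icc {x : ℝ} {j : Fin r} (hx : x ∈ Icc (M.pts j.castSucc) (M.pts j.succ)) :
    x + M.tr j ∈ Icc (0 : ℝ) 1 :=
  ⟨by linarith [M.tr_lb j, hx.1], by linarith [M.tr_ub j, hx.2]⟩

variable (M) in
theorem mapsTo_map_Ico : MapsTo M.map (Ico 0 1) (Ico 0 1) := fun x hx => by
  obtain ⟨j, hj⟩ := M.exists_mem_seg hx
  rw [map_eq_add_tr hj]
  exact ⟨(add_tr_mem_Icc (Ico_subset_Icc_self hj)).1, by linarith [M.tr_ub j, hj.2]⟩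

variable (M) in
theorem mapsTo_leftMap_Ioc : MapsTo M.leftMap (Ioc 0 1) (Ioc 0 1) := fun x hx => by
  obtain ⟨j, hj⟩ := M.exists_mem_segIoc hx
  rw [leftMap_eq_add_tr hj]
  exact ⟨by linarith [M.tr_lb j, hj.1], (add_tr_mem_Icc (Ioc_subset_Icc_self hj)).2⟩

variable (M) in
theorem iterImage_succ (n : ℕ) : M.iterImage (n + 1) = M.map '' M.iterImage n := by
  rw [iterImage, iterImage, Function.iterate_succ', image_comp]

variable (M) in
theorem iterImage_succ_subset (n : ℕ) : M.iterImage (n + 1) ⊆ M.iterImage n := by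
  rw [iterImage, iterImage, Function.iterate_succ, image_comp]
  exact image_mono M.mapsTo_map_Ico.image_subset

variable (M) in
theorem iterImage_subset_Ico (n : ℕ) : M.iterImage n ⊆ Ico 0 1 :=
  (M.mapsTo_map_Ico.iterate n).image_subset

variable (M) in
theorem X_subset_Ico : M.X ⊆ Ico 0 1 := fun _ hx => by
  simpa using mem_iInter.1 hx 0

theorem map_mem_X {x : ℝ} (hx : x ∈ M.X) : M.map x ∈ M.X :=
  mem_iInter.2 fun n => M.iterImage_succ_subset n <| by
    rw [M.iterImage_succ]; exact mem_image_of_mem _ (mem_iInter.1 hx n)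

theorem leftMap_mem_X {x : ℝ} (hx : x ∈ M.X) (hβ : ∀ j : Fin r, x ≠ M.pts j.castSucc) :
    M.leftMap x ∈ M.X := by
  obtain ⟨j, hj⟩ := M.exists_mem_seg (M.X_subset_Ico hx)
  have hIoc : x ∈ M.segIoc j := ⟨lt_of_le_of_ne hj.1 (hβ j).symm, hj.2.le⟩
  simpa [leftMap_eq_add_tr hIoc, ← map_eq_add_tr hj] using map_mem_X hx

theorem Ico_leftMap_subset_X {x δ : ℝ} {j : Fin r} (hx : x ∈ M.segIoc j)
    (hδ : M.pts j.castSucc ≤ x - δ) (hgerm : Ico (x - δ) x ⊆ M.X) :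
    Ico (M.leftMap x - δ) (M.leftMap x) ⊆ M.X := by
  rw [leftMap_eq_add_tr hx]
  intro y hy
  have hw : y - M.tr j ∈ Ico (x - δ) x := ⟨by linarith [hy.1], by linarith [hy.2]⟩
  have hseg : y - M.tr j ∈ M.seg j := ⟨hδ.trans hw.1, hw.2.trans_le hx.2⟩
  simpa [map_eq_add_tr hseg] using map_mem_X (hgerm hw)

theorem exists_iterate_leftMap_eq_of_frequently_mem_iterImage :
    ∀ {N : ℕ} {b : ℝ}, b ∉ M.iterImage N → (∃ᶠ y in 𝓝[<] b, y ∈ M.iterImage N) →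
      ∃ (k : ℕ) (j : Fin r), M.leftMap^[k] (M.pts j.succ) = b
  | 0, b, hb, hfreq => by
    simp only [iterImage, Function.iterate_zero, image_id] at hb hfreq
    have hb1 : b = 1 := by
      have hb01 := mem_Ioc_of_frequently_mem_Ico hfreq
      exact le_antisymm hb01.2 (not_lt.1 fun h => hb ⟨hb01.1.le, h⟩)
    have hr := M.hr
    refine ⟨0, ⟨r - 1, by omega⟩, ?_⟩
    rw [Function.iterate_zero_apply, hb1, ← M.pts_last]
    exact congrArg M.pts (Fin.ext (by simp only [Fin.val_succ, Fin.val_last]; omega))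
  | N + 1, b, hb, hfreq => by
    rw [M.iterImage_succ] at hb hfreq
    obtain ⟨j, hj⟩ : ∃ j, ∃ᶠ y in 𝓝[<] b, y - M.tr j ∈ M.iterImage N ∩ M.seg j := by
      refine frequently_exists.1 (hfreq.mono ?_)
      rintro _ ⟨w, hw, rfl⟩
      obtain ⟨j, hj⟩ := M.exists_mem_seg (M.iterImage_subset_Ico N hw)
      exact ⟨j, by rw [map_eq_add_tr hj, add_sub_cancel_right]; exact ⟨hw, hj⟩⟩
    rw [← frequently_map (m := (· - M.tr j)), map_subRight_nhdsLT] at hj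
    have he : b - M.tr j ∈ M.segIoc j := mem_Ioc_of_frequently_mem_Ico (hj.mono fun _ h => h.2)
    have hleft : M.leftMap (b - M.tr j) = b := by rw [leftMap_eq_add_tr he, sub_add_cancel]
    rcases he.2.eq_or_lt with heq | hlt
    · exact ⟨1, j, by rw [Function.iterate_one, ← heq, hleft]⟩
    · have hnotMem : b - M.tr j ∉ M.iterImage N := fun hmem =>
        hb ⟨_, hmem, by rw [map_eq_add_tr ⟨he.1.le, hlt⟩, sub_add_cancel]⟩
      obtain ⟨k, i, hk⟩ :=
        exists_iterate_leftMap_eq_of_frequently_mem_iterImage hnotMem (hj.mono fun _ h => h.1)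
      exact ⟨k + 1, i, by rw [Function.iterate_succ_apply', hk, hleft]⟩

theorem IsRightEndpoint.exists_iterate_leftMap_eq {b : ℝ} (hb : M.IsRightEndpoint b) :
    ∃ (k : ℕ) (j : Fin r), M.leftMap^[k] (M.pts j.succ) = b := by
  obtain ⟨hbX, a, hab, hgerm⟩ := hb
  obtain ⟨N, hN⟩ : ∃ N, b ∉ M.iterImage N := by simpa [X, iterImage] using hbX
  refine exists_iterate_leftMap_eq_of_frequently_mem_iterImage hN (Eventually.frequently ?_)
  exact mem_of_superset (Ico_mem_nhdsLT hab) fun y hy => mem_iInter.1 (hgerm hy) N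

theorem false_of_injective_orbit {w : ℕ → ℝ} (hw : ∀ t, w (t + 1) = M.leftMap (w t))
    (hIoc : ∀ t, w t ∈ Ioc (0 : ℝ) 1) (hinj : Function.Injective w) (hX : ∀ t, w t ∉ M.X)
    {a : ℝ} (ha : a < w 0) (hgerm : Ico a (w 0) ⊆ M.X) : False := by
  choose j hj using fun t => M.exists_mem_segIoc (hIoc t)
  let ν : ℕ → ℝ := fun t => Nat.rec (w 0 - a) (fun t v => min v (w t - M.pts (j t).castSucc)) t
  have hν_succ : ∀ t, ν (t + 1) = min (ν t) (w t - M.pts (j t).castSucc) := fun _ => rfl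
  have hν_pos : ∀ t, 0 < ν t := by
    intro t
    induction t with
    | zero => exact sub_pos.2 ha
    | succ t ih => rw [hν_succ]; exact lt_min ih (sub_pos.2 (hj t).1)
  have hν_germ : ∀ t, Ico (w t - ν t) (w t) ⊆ M.X := by
    intro t
    induction t with
    | zero => simpa [ν] using hgerm
    | succ t ih =>
      rw [hw, hν_succ]
      have := min_le_left (ν t) (w t - M.pts (j t).castSucc)
      have := min_le_right (ν t) (w t - M.pts (j t).castSucc)
      exact Ico_leftMap_subset_X (hj t) (by linarith)
        ((Ico_subset_Ico_left (by linarith)).trans ih)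
  have hshrink : {t | w t - M.pts (j t).castSucc < ν t}.Finite := by
    refine Finite.of_finite_image (f := j) (finite_univ.subset (subset_univ _))
      fun s hs t ht hst => hinj ?_
    by_contra hne
    wlog hlt : w s < w t generalizing s t
    · exact this t ht s hs hst.symm (Ne.symm hne) (lt_of_le_of_ne (not_lt.1 hlt) (Ne.symm hne))
    have hβ : M.pts (j t).castSucc < w s := hst ▸ (hj s).1
    exact hX s (hν_germ t ⟨by linarith [show _ < ν t from ht], hlt⟩)
  obtain ⟨T, hT⟩ := hshrink.bddAbove
  have hν_const : ∀ t, T + 1 ≤ t → ν (t + 1) = ν t := fun t ht =>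
    min_eq_left (not_lt.1 fun h => absurd (hT h) (by omega))
  have hε : ∀ t, ν (T + 1) ≤ ν t := by
    intro t
    rcases le_total t (T + 1) with ht | ht
    · exact antitone_nat_of_succ_le (fun t => (hν_succ t).trans_le (min_le_left _ _)) ht
    · induction t, ht using Nat.le_induction with
      | base => exact le_rfl
      | succ t ht ih => rwa [hν_const t ht]
  exact not_injective_of_forall_Ico_subset
    ((Metric.isBounded_Icc (0 : ℝ) 1).subset
      (range_subset_iff.2 fun t => Ioc_subset_Icc_self (hIoc t)))
    hX (hν_pos (T + 1))
    (fun t => (Ico_subset_Ico_left (by linarith [hε t])).trans (hν_germ t)) hinj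

variable (M) in
theorem finite_isRightEndpoint_inter_range_iterate {z : ℝ} (hz : z ∈ Ioc (0 : ℝ) 1) :
    ({b | M.IsRightEndpoint b} ∩ range fun k => M.leftMap^[k] z).Finite := by
  set y : ℕ → ℝ := fun k => M.leftMap^[k] z
  by_cases hinj : Function.Injective y
  swap
  · exact (Function.finite_range_iterate_of_not_injective hinj).subset inter_subset_right
  have hsucc : ∀ k, y (k + 1) = M.leftMap (y k) := fun k => Function.iterate_succ_apply' _ _ _
  obtain ⟨T, hT⟩ : BddAbove (y ⁻¹' range fun j : Fin r => M.pts j.castSucc) :=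
    ((finite_range _).preimage hinj.injOn).bddAbove
  have hstay : ∀ t, T < t → y t ∈ M.X → ∀ m, y (t + m) ∈ M.X := by
    intro t ht htX m
    induction m with
    | zero => exact htX
    | succ m ih =>
      rw [← add_assoc, hsucc]
      exact leftMap_mem_X ih fun j hj => absurd (hT ⟨j, hj.symm⟩) (by omega)
  by_contra hinf
  have hK : (y ⁻¹' {b | M.IsRightEndpoint b}).Infinite := fun hfin =>
    hinf ((hfin.image y).subset <| by rintro _ ⟨hb, k, rfl⟩; exact ⟨k, hb, rfl⟩)
  obtain ⟨k₀, hk₀, hk₀T⟩ := hK.exists_gt T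
  have hout : ∀ t, y (k₀ + t) ∉ M.X := fun t htX => by
    obtain ⟨k, hk, hkt⟩ := hK.exists_gt (k₀ + t)
    have hkX := hstay _ (by omega) htX (k - (k₀ + t))
    rw [Nat.add_sub_cancel' hkt.le] at hkX
    exact hk.1 hkX
  obtain ⟨-, a, ha, hgerm⟩ := hk₀
  exact false_of_injective_orbit (w := fun t => y (k₀ + t)) (fun t => hsucc (k₀ + t))
    (fun t => (M.mapsTo_leftMap_Ioc.iterate _) hz) (hinj.comp (add_right_injective k₀)) hout
    ha hgerm

variable (M) in
theorem pts_succ_mem_Ioc (j : Fin r) : M.pts j.succ ∈ Ioc (0 : ℝ) 1 :=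
  ⟨M.pts_zero ▸ M.pts_mono (Fin.succ_pos j), M.pts_last ▸ M.pts_mono.monotone (Fin.le_last _)⟩

variable (M) in
theorem finite_setOf_isRightEndpoint : {b | M.IsRightEndpoint b}.Finite := by
  refine (finite_iUnion fun j =>
    M.finite_isRightEndpoint_inter_range_iterate (M.pts_succ_mem_Ioc j)).subset fun b hb => ?_
  obtain ⟨k, j, rfl⟩ := hb.exists_iterate_leftMap_eq
  exact mem_iUnion.2 ⟨j, hb, k, rfl⟩

end ITM

/-- The attractor of an interval translation map has only finitely many interval
components. -/
theorem finitely_many_interval_components {r : ℕ} (M : ITM r) :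
    {J : Set ℝ | M.IsIntervalComponent J}.Finite := by
  refine Finite.of_finite_image (f := sSup) (M.finite_setOf_isRightEndpoint.subset ?_) ?_
  · rintro _ ⟨_, ⟨⟨a, b, hab, rfl⟩, x, hx, hJ⟩, rfl⟩
    rw [csSup_Ico hab]
    exact ⟨notMem_of_Ico_eq_connectedComponentIn hab hx hJ, a, hab,
      hJ ▸ connectedComponentIn_subset _ _⟩
  · rintro _ ⟨⟨a, b, hab, rfl⟩, x, -, hJ⟩ _ ⟨⟨a', b', hab', rfl⟩, x', -, hJ'⟩ h
    rw [csSup_Ico hab, csSup_Ico hab'] at h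
    subst h
    exact Ico_eq_of_eq_connectedComponentIn hab hab' hJ hJ'
end
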